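/- arXiv:1301.7356 — 5 statements merged into one kernel-verified Lean document; each statement's English description precedes it below -/
import Mathlib

section
/- Given a finite undirected graph G and a real vector a indexed by the vertices, there exists a real vector x indexed by the edges such that for every vertex v the sum of x_e over edges incident to v equals a_v, if and only if for every bipartite connected component C of G with bipartition (U_C, W_C), the sum of a_v over U_C equals the sum of a_v over W_C. -/
open Finset
open scoped Classical

variable {V E : Type}

/-- Adjacency in a multigraph given by its endpoint function. -/
def Adj (ends : E → Sym2 V) (u w : V) : Prop := ∃ e, ends e = s(u, w)

/-- Reachability (walks of any length). -/
def Reach (ends : E → Sym2 V) : V → V → Prop := Relation.ReflTransGen (Adj ends)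

/-- The connected component of a vertex, as a vertex set. -/
def component (ends : E → Sym2 V) (v : V) : Set V := {w | Reach ends v w}

/-- Reachability using only edges in `D`. -/
def ReachOn (ends : E → Sym2 V) (D : Set E) (u w : V) : Prop :=
  Relation.ReflTransGen (fun a b => ∃ e ∈ D, ends e = s(a, b)) u w

/-- Component of `v` in the spanning subgraph with edge set `D`. -/
def componentOn (ends : E → Sym2 V) (D : Set E) (v : V) : Set V := {w | ReachOn ends D v w}

/-- A vertex set is bipartite if it admits a proper 2-colouring of all edges
incident to it (equivalently, no odd cycle inside it). -/
def BipartiteOn (ends : E → Sym2 V) (S : Set V) : Prop :=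
  ∃ f : V → Bool, ∀ (e : E) (u w : V), ends e = s(u, w) → u ∈ S → f u ≠ f w

/-- The number of bipartite connected components. -/
noncomputable def numBipComp [Fintype V] (ends : E → Sym2 V) : ℕ :=
  Set.ncard {S : Set V | (∃ v, S = component ends v) ∧ BipartiteOn ends S}

/-- The real incidence matrix: entry `(v, e)` is `1` iff `v` is an endpoint of `e`
(a loop contributes a single `1`). -/
noncomputable def incMatrix (ends : E → Sym2 V) : Matrix V E ℝ :=
  fun v e => if v ∈ ends e then (1 : ℝ) else 0

/-- Degree of `v` in the edge set `F`, with loops counted twice. -/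
noncomputable def degIn (ends : E → Sym2 V) (F : Finset E) (v : V) : ℕ :=
  ∑ e ∈ F, (if ends e = s(v, v) then 2 else if v ∈ ends e then 1 else 0)

/-- An edge set is a cycle iff it is nonempty, every vertex has degree 0 or 2 in it,
and its support is connected via its edges.  This includes loops (length-1 cycles)
and pairs of parallel edges (length-2 cycles). -/
def IsCycle (ends : E → Sym2 V) (F : Finset E) : Prop :=
  F.Nonempty ∧ (∀ v : V, degIn ends F v = 0 ∨ degIn ends F v = 2) ∧
    ∀ u w : V, (∃ e ∈ F, u ∈ ends e) → (∃ e ∈ F, w ∈ ends e) → ReachOn ends (↑F) u w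

/-- The cycles whose edges lie in `D` and whose vertices lie in `S`. -/
def CyclesIn (ends : E → Sym2 V) (D : Set E) (S : Set V) : Set (Finset E) :=
  {F | IsCycle ends F ∧ (∀ e ∈ F, e ∈ D) ∧ ∀ e ∈ F, ∀ v : V, v ∈ ends e → v ∈ S}

/-- The part of the graph with edges in `D` and vertices in `S` is acyclic, or
contains exactly one cycle with that cycle having odd length. -/
def AcyclicOrOneOdd (ends : E → Sym2 V) (D : Set E) (S : Set V) : Prop :=
  CyclesIn ends D S = ∅ ∨ ∃ F : Finset E, CyclesIn ends D S = {F} ∧ Odd F.card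

/-- The nullity of a real matrix. -/
noncomputable def nullity {α β : Type} [Fintype β] (A : Matrix α β ℝ) : ℕ :=
  Module.finrank ℝ (LinearMap.ker (Matrix.mulVecLin A))

/-- The fractional perfect `b`-matching polytope of the multigraph. -/
def PGb [Fintype E] (ends : E → Sym2 V) (b : V → ℝ) : Set (E → ℝ) :=
  {x | (∀ e, 0 ≤ x e) ∧ ∀ v : V, ∑ e : E, (if v ∈ ends e then x e else 0) = b v}

/-! By the Fredholm alternative, `incMatrix ends *ᵥ x = a` is solvable iff `a` is orthogonal to
every `y` with `y ᵥ* incMatrix ends = 0`, i.e. every `y` with `y p = -y q` along each edge `pq`.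
On a connected component such a `y` takes only the values `±c`; when `c ≠ 0` its sign is a proper
2-colouring, and the component contributes `c (a(U) - a(W))` to `y ⬝ᵥ a`. Conversely, the `±1`
vector of a bipartition of a component is such a `y`, which gives the necessity of the balance
conditions. -/

open Matrix

theorem Matrix.exists_mulVec_eq_iff {K m n : Type*} [Field K] [Fintype m] [Fintype n]
    [DecidableEq m] (A : Matrix m n K) (b : m → K) :
    (∃ x, A *ᵥ x = b) ↔ ∀ y, y ᵥ* A = 0 → y ⬝ᵥ b = 0 := by
  have hann (y : m → K) :
      dotProductEquiv K m y ∈ (LinearMap.range A.mulVecLin).dualAnnihilator ↔ y ᵥ* A = 0 := by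
    simp only [Submodule.mem_dualAnnihilator, LinearMap.mem_range, forall_exists_index,
      forall_apply_eq_imp_iff, Matrix.mulVecLin_apply, dotProductEquiv_apply_apply,
      dotProduct_mulVec]
    exact ⟨fun h => funext fun j => by simpa using h (Pi.single j 1),
      fun h x => by simp [h]⟩
  rw [← Set.mem_range, ← Matrix.coe_mulVecLin, ← LinearMap.coe_range, SetLike.mem_coe,
    ← Subspace.forall_mem_dualAnnihilator_apply_eq_zero_iff]
  refine ⟨fun h y hy => by simpa using h _ ((hann y).2 hy), fun h φ hφ => ?_⟩
  obtain ⟨y, rfl⟩ := (dotProductEquiv K m).surjective φ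
  simpa using h y ((hann y).1 hφ)

lemma sum_ite_mem_sym2 {M : Type*} [AddCommMonoid M] [Fintype V] (p q : V) (g : V → M) :
    ∑ u : V, (if u ∈ s(p, q) then g u else 0) = if p = q then g p else g p + g q := by
  simp only [Sym2.mem_iff]
  split_ifs with h
  · subst h
    simp
  · rw [← Finset.sum_filter, show univ.filter (fun u => u = p ∨ u = q) = {p, q} by ext; simp,
      Finset.sum_pair h]

section Incidence

variable (ends : E → Sym2 V)

lemma mulVec_incMatrix_apply [Fintype E] (x : E → ℝ) (v : V) :
    (incMatrix ends *ᵥ x) v = ∑ e, if v ∈ ends e then x e else 0 := by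
  simp only [mulVec, dotProduct, incMatrix, ite_mul, one_mul, zero_mul]

lemma vecMul_incMatrix_apply [Fintype V] (y : V → ℝ) (e : E) :
    (y ᵥ* incMatrix ends) e = ∑ u, if u ∈ ends e then y u else 0 := by
  simp only [vecMul, dotProduct, incMatrix, mul_ite, mul_one, mul_zero]

-- At a loop `s(p, p)` this forces `y p = 0`, as a loop has a single `1` in `incMatrix`.
def IsEdgeAlternating (y : V → ℝ) : Prop :=
  ∀ e p q, ends e = s(p, q) → y p = -y q

lemma vecMul_incMatrix_eq_zero_iff [Fintype V] (y : V → ℝ) :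
    y ᵥ* incMatrix ends = 0 ↔ IsEdgeAlternating ends y := by
  have key (e : E) (p q : V) (he : ends e = s(p, q)) :
      (y ᵥ* incMatrix ends) e = 0 ↔ y p = -y q := by
    rw [vecMul_incMatrix_apply, he, sum_ite_mem_sym2]
    split_ifs with hpq
    · subst hpq
      constructor <;> intro h <;> linarith
    · constructor <;> intro h <;> linarith
  refine ⟨fun h e p q he => (key e p q he).1 (congrFun h e), fun h => funext fun e => ?_⟩
  obtain ⟨p, q, he⟩ : ∃ p q, ends e = s(p, q) := Sym2.exists.mp ⟨_, rfl⟩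
  exact (key e p q he).2 (h e p q he)

lemma mem_component_self (v : V) : v ∈ component ends v := Relation.ReflTransGen.refl

lemma mem_component_iff_of_ends_eq {v p q : V} {e : E} (he : ends e = s(p, q)) :
    p ∈ component ends v ↔ q ∈ component ends v :=
  ⟨fun hp => hp.tail ⟨e, he⟩, fun hq => hq.tail ⟨e, he.trans Sym2.eq_swap⟩⟩

lemma component_eq_iff_mem {u v : V} :
    component ends u = component ends v ↔ u ∈ component ends v := by
  have : Std.Symm (Adj ends) := ⟨fun _ _ ⟨e, he⟩ => ⟨e, he.trans Sym2.eq_swap⟩⟩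
  have reach_symm {x y : V} (h : Reach ends x y) : Reach ends y x :=
    Std.Symm.symm (r := Relation.ReflTransGen (Adj ends)) _ _ h
  refine ⟨fun h => h ▸ mem_component_self ends u, fun h => Set.ext fun w => ?_⟩
  exact ⟨fun hw => Relation.ReflTransGen.trans h hw, fun hw => (reach_symm h).trans hw⟩

lemma sum_eq_zero_of_forall_sum_component_eq_zero [Fintype V] {M : Type*} [AddCommMonoid M]
    (g : V → M) (h : ∀ v, ∑ u with u ∈ component ends v, g u = 0) : ∑ u, g u = 0 := by
  rw [← Finset.sum_fiberwise univ (component ends) g]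
  refine Finset.sum_eq_zero fun C _ => ?_
  by_cases hC : ∃ v, component ends v = C
  · obtain ⟨v, rfl⟩ := hC
    simpa only [component_eq_iff_mem] using h v
  · exact Finset.sum_eq_zero fun u hu => absurd (Finset.mem_filter.1 hu).2 (not_exists.1 hC u)

def IsProperColouringOn (S : Set V) (f : V → Bool) : Prop :=
  ∀ e u w, ends e = s(u, w) → u ∈ S → f u ≠ f w

noncomputable def componentSign (v : V) (f : V → Bool) : V → ℝ :=
  fun u => if u ∈ component ends v then (if f u then 1 else -1) else 0

lemma isEdgeAlternating_componentSign {v : V} {f : V → Bool}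
    (hf : IsProperColouringOn ends (component ends v) f) :
    IsEdgeAlternating ends (componentSign ends v f) := by
  intro e p q he
  by_cases hp : p ∈ component ends v
  · have hq := (mem_component_iff_of_ends_eq ends he).1 hp
    have hpq := hf e p q he hp
    cases hfp : f p <;> cases hfq : f q <;> simp_all [componentSign]
  · have hq := mt (mem_component_iff_of_ends_eq ends he).2 hp
    simp [componentSign, hp, hq]

lemma componentSign_dotProduct [Fintype V] (v : V) (f : V → Bool) (a : V → ℝ) :
    componentSign ends v f ⬝ᵥ a =
      ∑ u, (if u ∈ component ends v ∧ f u = true then a u else 0)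
        - ∑ u, (if u ∈ component ends v ∧ f u = false then a u else 0) := by
  rw [dotProduct, ← Finset.sum_sub_distrib]
  refine Finset.sum_congr rfl fun u _ => ?_
  by_cases hu : u ∈ component ends v <;> cases hfu : f u <;> simp [componentSign, hu, hfu]

namespace IsEdgeAlternating

variable {ends} {y : V → ℝ}

lemma eq_or_eq_neg (hy : IsEdgeAlternating ends y) {v u : V} (hu : u ∈ component ends v) :
    y u = y v ∨ y u = -y v := by
  induction hu with
  | refl => exact Or.inl rfl
  | tail _ hbc ih =>
    obtain ⟨e, he⟩ := hbc
    have := hy e _ _ he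
    rcases ih with h | h
    · right; linarith
    · left; linarith

lemma isProperColouringOn (hy : IsEdgeAlternating ends y) {v : V} (hv : y v ≠ 0) :
    IsProperColouringOn ends (component ends v) (fun u => decide (y u = y v)) := by
  intro e p q he hp hpq
  have hpq : y p = y v ↔ y q = y v := decide_eq_decide.1 hpq
  have hqp := hy e p q he
  rcases hy.eq_or_eq_neg hp with h | h
  · exact hv (by linarith [hpq.1 h])
  · exact hv (by linarith [hpq.2 (by linarith)])

lemma eq_mul_componentSign (hy : IsEdgeAlternating ends y) {v u : V}
    (hu : u ∈ component ends v) :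
    y u = y v * componentSign ends v (fun u => decide (y u = y v)) u := by
  rcases hy.eq_or_eq_neg hu with h | h <;> simp [componentSign, hu, h]

lemma sum_component_mul_eq_zero [Fintype V] (hy : IsEdgeAlternating ends y) {a : V → ℝ} {v : V}
    (H : ∀ f, IsProperColouringOn ends (component ends v) f →
      ∑ u, (if u ∈ component ends v ∧ f u = true then a u else 0)
        = ∑ u, (if u ∈ component ends v ∧ f u = false then a u else 0)) :
    ∑ u with u ∈ component ends v, y u * a u = 0 := by
  set σ := componentSign ends v (fun u => decide (y u = y v))
  have hσ : ∑ u with u ∈ component ends v, y u * a u = y v * (σ ⬝ᵥ a) := by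
    rw [dotProduct, Finset.mul_sum, Finset.sum_filter]
    refine Finset.sum_congr rfl fun u _ => ?_
    split_ifs with hu
    · rw [hy.eq_mul_componentSign hu, mul_assoc]
    · simp [σ, componentSign, hu]
  rw [hσ, componentSign_dotProduct]
  by_cases hv : y v = 0
  · rw [hv, zero_mul]
  · rw [H _ (hy.isProperColouringOn hv), sub_self, mul_zero]

end IsEdgeAlternating

end Incidence

theorem exists_incidence_solution_iff [Fintype V] [Fintype E] (ends : E → Sym2 V)
    (a : V → ℝ) :
    (∃ x : E → ℝ, ∀ v : V, ∑ e : E, (if v ∈ ends e then x e else 0) = a v) ↔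
      ∀ (v : V) (f : V → Bool),
        (∀ (e : E) (u w : V), ends e = s(u, w) → u ∈ component ends v → f u ≠ f w) →
        ∑ u : V, (if u ∈ component ends v ∧ f u = true then a u else 0)
          = ∑ u : V, (if u ∈ component ends v ∧ f u = false then a u else 0) := by
  have hsystem : (∃ x : E → ℝ, ∀ v, ∑ e, (if v ∈ ends e then x e else 0) = a v) ↔
      ∃ x, incMatrix ends *ᵥ x = a := by
    simp only [funext_iff, mulVec_incMatrix_apply]
  rw [hsystem, Matrix.exists_mulVec_eq_iff]
  refine ⟨fun h v f hf => ?_, fun H y hy => ?_⟩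
  · have := h _ ((vecMul_incMatrix_eq_zero_iff ends _).2 (isEdgeAlternating_componentSign ends hf))
    rwa [componentSign_dotProduct, sub_eq_zero] at this
  · have hy := (vecMul_incMatrix_eq_zero_iff ends y).1 hy
    exact sum_eq_zero_of_forall_sum_component_eq_zero ends _
      fun v => hy.sum_component_mul_eq_zero (H v)
end

section
/- Let P = {x ∈ R^N : x_i ≥ 0 for all i, A x = a} be a polytope, let F be a nonempty face of P with support N' = {i ∈ N : some x ∈ F has x_i ≠ 0}, and let A' be the submatrix of A consisting of the columns indexed by N'. Then F is affinely isomorphic to the polytope F' = {y ∈ R^{N'} : y_i ≥ 0 for all i ∈ N', A' y = a}, and the dimension of F equals the nullity of A'. -/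
/-!
Let `S` be the support of `F` and `P` the polytope. Averaging points of `F` gives `z ∈ F` with
`z i > 0` for every `i ∈ S`. If `x ∈ P` vanishes off `S`, then `z + t (z - x)` stays in `P` for
small `t > 0`, so a functional maximized over `P` at `z` is also maximized at `x`. Hence `F` is
exactly the set of points of `P` vanishing off `S`, i.e. the image of
`F' = {y ≥ 0 : A' y = a}` under extension by zero, and restriction to `S` inverts it. Finally
`F'` contains the strictly positive point `z|S`, so every `v ∈ ker A'` is a direction along which
one can move inside `F'`: the affine span of `F'` has direction `ker A'`.
-/

open scoped Classical

/-- The polyhedron `{x ≥ 0 : A x = a}`. -/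
def stdPolytope {M N : Type} [Fintype N] (A : Matrix M N ℝ) (a : M → ℝ) :
    Set (N → ℝ) :=
  {x | (∀ i, 0 ≤ x i) ∧ A.mulVec x = a}

/-- The support of a set of vectors. -/
def setSupp {N : Type} (X : Set (N → ℝ)) : Set N := {i | ∃ x ∈ X, x i ≠ 0}

/-- The submatrix of `A` on the columns indexed by `S`. -/
def colSub {M N : Type} (A : Matrix M N ℝ) (S : Set N) : Matrix M S ℝ :=
  A.submatrix id (Subtype.val)

/-- The dimension of a subset of a real vector space: the dimension of
the direction of its affine span. -/
noncomputable def setDim {N : Type} (F : Set (N → ℝ)) : ℕ :=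
  Module.finrank ℝ (affineSpan ℝ F).direction

open Function Matrix Filter Topology

lemma colSub_mulVec {M N : Type} [Fintype N] (A : Matrix M N ℝ) (S : Set N) (y : S → ℝ) :
    colSub A S *ᵥ y = A *ᵥ ExtendByZero.linearMap ℝ ((↑) : S → N) y := by
  funext m
  refine Fintype.sum_of_injective _ Subtype.val_injective _ _ (fun j hj => ?_) (fun j => ?_)
  · rw [ExtendByZero.linearMap_apply, extend_apply' _ _ _ hj, Pi.zero_apply, mul_zero]
  · rw [ExtendByZero.linearMap_apply, Subtype.val_injective.extend_apply]
    rfl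

lemma extendByZero_restrict_of_vanishing {N : Type} {S : Set N} {x : N → ℝ}
    (hx : ∀ i ∉ S, x i = 0) : ExtendByZero.linearMap ℝ ((↑) : S → N) (fun i => x i) = x := by
  funext i
  by_cases hi : i ∈ S
  · rw [ExtendByZero.linearMap_apply, extend_val_apply hi]
  · rw [ExtendByZero.linearMap_apply, extend_val_apply' hi, hx i hi, Pi.zero_apply]

lemma image_extendByZero_stdPolytope_colSub {M N : Type} [Fintype N] (A : Matrix M N ℝ)
    (a : M → ℝ) (S : Set N) :
    ExtendByZero.linearMap ℝ ((↑) : S → N) '' stdPolytope (colSub A S) a =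
      {x ∈ stdPolytope A a | ∀ i ∉ S, x i = 0} := by
  ext x
  constructor
  · rintro ⟨y, ⟨hy, hya⟩, rfl⟩
    refine ⟨⟨fun i => ?_, by rw [← colSub_mulVec, hya]⟩, fun i hi => extend_val_apply' hi⟩
    by_cases hi : i ∈ S
    · rw [ExtendByZero.linearMap_apply, extend_val_apply hi]
      exact hy _
    · rw [ExtendByZero.linearMap_apply, extend_val_apply' hi]
      rfl
  · rintro ⟨⟨hx, hxa⟩, hxS⟩
    refine ⟨fun i => x i, ⟨fun i => hx i, ?_⟩, extendByZero_restrict_of_vanishing hxS⟩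
    rw [colSub_mulVec, extendByZero_restrict_of_vanishing hxS, hxa]

lemma convex_stdPolytope {M N : Type} [Fintype N] (A : Matrix M N ℝ) (a : M → ℝ) :
    Convex ℝ (stdPolytope A a) := by
  intro x hx y hy s t hs ht hst
  refine ⟨fun i => ?_, ?_⟩
  · have := hx.1 i
    have := hy.1 i
    simp only [Pi.add_apply, Pi.smul_apply, smul_eq_mul]
    positivity
  · rw [mulVec_add, mulVec_smul, mulVec_smul, hx.2, hy.2, ← add_smul, hst, one_smul]

lemma exists_pos_forall_nonneg_add_mul {N : Type} [Finite N] {z v : N → ℝ}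
    (hz : ∀ i, 0 ≤ z i) (hv : ∀ i, z i = 0 → 0 ≤ v i) :
    ∃ t > 0, ∀ i, 0 ≤ z i + t * v i := by
  have hev : ∀ i, ∀ᶠ t in 𝓝[>] (0 : ℝ), 0 ≤ z i + t * v i := by
    intro i
    rcases (hz i).eq_or_lt with h | h
    · filter_upwards [self_mem_nhdsWithin] with t (ht : 0 < t)
      have := hv i h.symm
      rw [← h]
      positivity
    · have hlim : Tendsto (fun t => z i + t * v i) (𝓝[>] 0) (𝓝 (z i)) :=
        ((continuous_const.add (continuous_id.mul continuous_const)).tendsto' 0 (z i)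
          (by simp)).mono_left nhdsWithin_le_nhds
      exact hlim.eventually (eventually_ge_nhds h)
  obtain ⟨t, ht, h⟩ := ((eventually_all.2 hev).and self_mem_nhdsWithin).exists
  exact ⟨t, h, ht⟩

lemma exists_pos_on_setSupp {N : Type} [Finite N] {F : Set (N → ℝ)} (hconv : Convex ℝ F)
    (hnonneg : ∀ x ∈ F, ∀ i, 0 ≤ x i) (hne : F.Nonempty) :
    ∃ z ∈ F, ∀ i ∈ setSupp F, 0 < z i := by
  suffices ∀ T : Finset N, ↑T ⊆ setSupp F → ∃ z ∈ F, ∀ i ∈ T, 0 < z i by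
    simpa using this (setSupp F).toFinite.toFinset (by simp)
  intro T
  induction T using Finset.induction_on with
  | empty =>
    obtain ⟨x, hx⟩ := hne
    exact fun _ => ⟨x, hx, by simp⟩
  | insert j T _ ih =>
    intro hT
    obtain ⟨z, hzF, hz⟩ := ih (subset_trans (by simp) hT)
    obtain ⟨x, hxF, hxj⟩ := hT (Finset.mem_coe.2 (Finset.mem_insert_self j T))
    have hxj : 0 < x j := (hnonneg x hxF j).lt_of_ne' hxj
    refine ⟨(1 / 2 : ℝ) • z + (1 / 2 : ℝ) • x, hconv hzF hxF (by norm_num) (by norm_num)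
      (by norm_num), ?_⟩
    simp only [Finset.mem_insert, forall_eq_or_imp, Pi.add_apply, Pi.smul_apply, smul_eq_mul]
    exact ⟨by linarith [hnonneg z hzF j], fun i hi => by linarith [hz i hi, hnonneg x hxF i]⟩

lemma IsExposed.eq_vanishing_off_setSupp {M N : Type} [Fintype N] {A : Matrix M N ℝ}
    {a : M → ℝ} {F : Set (N → ℝ)} (hF : IsExposed ℝ (stdPolytope A a) F) (hne : F.Nonempty) :
    F = {x ∈ stdPolytope A a | ∀ i ∉ setSupp F, x i = 0} := by
  have hFP := hF.subset
  refine Set.Subset.antisymm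
    (fun x hx => ⟨hFP hx, fun i hi => not_not.1 fun h => hi ⟨x, hx, h⟩⟩) ?_
  rintro x ⟨hxP, hxS⟩
  obtain ⟨z, hzF, hz⟩ :=
    exists_pos_on_setSupp (hF.convex (convex_stdPolytope A a)) (fun x hx => (hFP hx).1) hne
  have hzP := hFP hzF
  obtain ⟨t, ht, hnonneg⟩ := exists_pos_forall_nonneg_add_mul (v := z - x) hzP.1 fun i hzi => by
    have hi : i ∉ setSupp F := fun hi => (hz i hi).ne' hzi
    simp [hzi, hxS i hi]
  have hp : z + t • (z - x) ∈ stdPolytope A a :=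
    ⟨hnonneg, by rw [mulVec_add, mulVec_smul, mulVec_sub, hzP.2, hxP.2, sub_self, smul_zero,
      add_zero]⟩
  obtain ⟨l, hl⟩ := hF hne
  rw [hl] at hzF ⊢
  have hlp := hzF.2 _ hp
  rw [map_add, map_smul, map_sub, smul_eq_mul] at hlp
  have hlzx : l z ≤ l x := by nlinarith
  exact ⟨hxP, fun y hy => (hzF.2 y hy).trans hlzx⟩

lemma vectorSpan_stdPolytope_of_pos {M N : Type} [Fintype N] {B : Matrix M N ℝ} {a : M → ℝ}
    {y : N → ℝ} (hy : y ∈ stdPolytope B a) (hpos : ∀ i, 0 < y i) :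
    vectorSpan ℝ (stdPolytope B a) = LinearMap.ker B.mulVecLin := by
  apply le_antisymm
  · rw [vectorSpan_def, Submodule.span_le]
    rintro _ ⟨x, hx, x', hx', rfl⟩
    simp [mulVec_sub, hx.2, hx'.2]
  · intro v hv
    rw [LinearMap.mem_ker, mulVecLin_apply] at hv
    obtain ⟨t, ht, hnonneg⟩ := exists_pos_forall_nonneg_add_mul (v := v) (fun i => (hpos i).le)
      fun i h => absurd h (hpos i).ne'
    have hmem : y + t • v ∈ stdPolytope B a :=
      ⟨hnonneg, by rw [mulVec_add, mulVec_smul, hv, hy.2, smul_zero, add_zero]⟩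
    have htv : t • v ∈ vectorSpan ℝ (stdPolytope B a) := by
      simpa using vsub_mem_vectorSpan ℝ hmem hy
    exact (Submodule.smul_mem_iff _ ht.ne').1 htv

lemma setDim_stdPolytope_of_pos {M N : Type} [Fintype N] {B : Matrix M N ℝ} {a : M → ℝ}
    {y : N → ℝ} (hy : y ∈ stdPolytope B a) (hpos : ∀ i, 0 < y i) :
    setDim (stdPolytope B a) = nullity B := by
  rw [setDim, nullity, direction_affineSpan, vectorSpan_stdPolytope_of_pos hy hpos]

lemma setDim_image_of_injective {ι κ : Type} (f : (ι → ℝ) →ₗ[ℝ] κ → ℝ) (hf : Injective f)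
    (s : Set (ι → ℝ)) : setDim (f '' s) = setDim s := by
  rw [setDim, setDim, direction_affineSpan, direction_affineSpan, ← f.coe_toAffineMap,
    ← AffineMap.map_vectorSpan]
  exact (Submodule.equivMapOfInjective f hf _).finrank_eq.symm

theorem face_iso_and_dim_general {M N : Type} [Fintype N]
    (A : Matrix M N ℝ) (a : M → ℝ)
    (F : Set (N → ℝ)) (hF : IsExposed ℝ (stdPolytope A a) F) (hne : F.Nonempty) :
    (∃ φ : (N → ℝ) →ᵃ[ℝ] ((setSupp F) → ℝ),
        Set.InjOn φ F ∧
        φ '' F = {y : (setSupp F) → ℝ |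
          (∀ i, 0 ≤ y i) ∧ (colSub A (setSupp F)).mulVec y = a}) ∧
    setDim F = nullity (colSub A (setSupp F)) := by
  set S := setSupp F
  set ι := ExtendByZero.linearMap ℝ ((↑) : S → N)
  set φ := LinearMap.funLeft ℝ ℝ ((↑) : S → N)
  have hφι : ∀ y, φ (ι y) = y := fun y => funext fun i => extend_val_apply i.2
  have hFι : F = ι '' stdPolytope (colSub A S) a := by
    rw [image_extendByZero_stdPolytope_colSub]
    exact hF.eq_vanishing_off_setSupp hne
  obtain ⟨z, hzF, hz⟩ :=
    exists_pos_on_setSupp (hF.convex (convex_stdPolytope A a)) (fun x hx => (hF.subset hx).1) hne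
  rw [hFι] at hzF ⊢
  obtain ⟨y, hy, rfl⟩ := hzF
  have hy_pos : ∀ i, 0 < y i := fun i => by
    rw [← hφι y]
    exact hz i i.2
  refine ⟨⟨φ.toAffineMap, ?_, ?_⟩, ?_⟩
  · rintro _ ⟨x, -, rfl⟩ _ ⟨x', -, rfl⟩ h
    simp only [LinearMap.coe_toAffineMap, hφι] at h
    rw [h]
  · rw [Set.image_image]
    simp only [LinearMap.coe_toAffineMap, hφι, Set.image_id']
    rfl
  · rw [setDim_image_of_injective ι (extend_injective Subtype.val_injective (0 : N → ℝ)),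
      setDim_stdPolytope_of_pos hy hy_pos]

theorem face_iso_and_dim {M N : Type} [Fintype M] [Fintype N]
    (A : Matrix M N ℝ) (a : M → ℝ)
    (hbdd : Bornology.IsBounded (stdPolytope A a))
    (F : Set (N → ℝ)) (hF : IsExposed ℝ (stdPolytope A a) F) (hne : F.Nonempty) :
    (∃ φ : (N → ℝ) →ᵃ[ℝ] ((setSupp F) → ℝ),
        Set.InjOn φ F ∧
        φ '' F = {y : (setSupp F) → ℝ |
          (∀ i, 0 ≤ y i) ∧ (colSub A (setSupp F)).mulVec y = a}) ∧
    setDim F = nullity (colSub A (setSupp F)) :=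
  face_iso_and_dim_general A a F hF hne
end

section
/- Let G be a finite bipartite graph and b : V → R nonnegative. The fractional perfect b-matching polytope P(G,b) is nonempty if and only if for every vertex cover C of G, the sum of b_v over v ∈ C is at least the sum of b_v over v ∉ C. -/
open Finset
open scoped Classical

variable {V E : Type}

/-! Necessity: for `x ∈ P(G,b)` and a vertex cover `C`, the surplus `b(C) - b(Cᶜ)` equals
`∑ₑ xₑ (|e ∩ C| - |e ∖ C|)`, and every term is nonnegative because each edge has two distinct
endpoints, at least one of them in `C`.

Sufficiency is by induction on the edges. An edge `e = uw` receives the weight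
`α = min (b u) (b w) (½ min_D surplus D)`, `D` ranging over the covers of the remaining edges that
contain `u` and `w`, and the remaining edges have to carry `b - α(𝟙ᵤ + 𝟙_w)`. A cover containing
only one of `u, w` keeps its surplus, one containing both loses `2α`. A cover `C` avoiding both
gains `2α` but need not cover `e`; here `surplus C + 2 b u = surplus (insert u C) ≥ 0`, and
`surplus C + surplus D ≥ 0` because uncrossing along the bipartition `V = L ⊔ Lᶜ` turns `C, D` into
two covers of all the edges, `(C ∪ D) ∩ L ∪ (C ∩ D) ∖ L` and its mirror image, with the same total
surplus. -/

section Surplus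

variable [DecidableEq V] {M : Type*} [AddCommGroup M]

def uncross (L C D : Finset V) : Finset V := (C ∪ D) ∩ L ∪ (C ∩ D) \ L

lemma sum_uncross (L C D : Finset V) (b : V → M) :
    ∑ v ∈ uncross L C D, b v = ∑ v ∈ (C ∪ D) ∩ L, b v + ∑ v ∈ (C ∩ D) \ L, b v :=
  sum_union (disjoint_sdiff.mono_left inter_subset_right)

variable [Fintype V]

lemma sum_uncross_add_sum_uncross_compl (L C D : Finset V) (b : V → M) :
    ∑ v ∈ uncross L C D, b v + ∑ v ∈ uncross Lᶜ C D, b v = ∑ v ∈ C, b v + ∑ v ∈ D, b v := by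
  rw [sum_uncross, sum_uncross, ← sdiff_eq_inter_compl, sdiff_compl, inf_eq_inter,
    ← sum_union_inter (s₁ := C), ← sum_inter_add_sum_sdiff (C ∪ D) L,
    ← sum_inter_add_sum_sdiff (C ∩ D) L]
  abel

def surplus (C : Finset V) : (V → M) →+ M where
  toFun b := ∑ v ∈ C, b v - ∑ v ∈ Cᶜ, b v
  map_zero' := by simp
  map_add' b b' := by simp only [Pi.add_apply, sum_add_distrib]; abel

lemma surplus_apply (C : Finset V) (b : V → M) :
    surplus C b = ∑ v ∈ C, b v - ∑ v ∈ Cᶜ, b v := rfl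

lemma surplus_eq_two_nsmul_sub (C : Finset V) (b : V → M) :
    surplus C b = 2 • ∑ v ∈ C, b v - ∑ v, b v := by
  rw [surplus_apply, ← sum_add_sum_compl C b, two_nsmul]; abel

lemma surplus_single (C : Finset V) (u : V) (a : M) :
    surplus C (Pi.single u a) = if u ∈ C then a else -a := by
  simp only [surplus_apply, sum_pi_single', mem_compl]
  split_ifs <;> simp

lemma surplus_insert {C : Finset V} {z : V} (hz : z ∉ C) (b : V → M) :
    surplus (insert z C) b = surplus C b + 2 • b z := by
  rw [surplus_eq_two_nsmul_sub, surplus_eq_two_nsmul_sub, sum_insert hz, smul_add]; abel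

lemma surplus_uncross_add_surplus_uncross_compl (L C D : Finset V) (b : V → M) :
    surplus (uncross L C D) b + surplus (uncross Lᶜ C D) b = surplus C b + surplus D b := by
  simp only [surplus_eq_two_nsmul_sub]
  rw [sub_add_sub_comm, sub_add_sub_comm, ← smul_add, ← smul_add,
    sum_uncross_add_sum_uncross_compl]

end Surplus

section Cover

variable (p q : E → V)

def IsVertexCover (F : Finset E) (C : Finset V) : Prop := ∀ e ∈ F, p e ∈ C ∨ q e ∈ C

lemma isVertexCover_insert {e : E} {s : Finset E} {C : Finset V} :
    IsVertexCover p q (insert e s) C ↔ (p e ∈ C ∨ q e ∈ C) ∧ IsVertexCover p q s C :=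
  forall_mem_insert _ _ _

variable {p q}

lemma isVertexCover_univ_iff [Fintype E] {ends : E → Sym2 V} (hends : ∀ e, ends e = s(p e, q e))
    (C : Finset V) : IsVertexCover p q univ C ↔ ∀ e, ∃ v ∈ C, v ∈ ends e := by
  simp only [IsVertexCover, mem_univ, true_implies, hends, Sym2.mem_iff]
  refine forall_congr' fun e => ⟨?_, ?_⟩
  · rintro (h | h)
    exacts [⟨_, h, Or.inl rfl⟩, ⟨_, h, Or.inr rfl⟩]
  · rintro ⟨v, hv, rfl | rfl⟩
    exacts [Or.inl hv, Or.inr hv]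

variable [DecidableEq V]

lemma IsVertexCover.uncross_insert {L C D : Finset V} {e : E} {s : Finset E}
    (hL : ∀ e, p e ∈ L ↔ q e ∉ L) (hC : IsVertexCover p q s C) (hD : IsVertexCover p q s D)
    (hpD : p e ∈ D) (hqD : q e ∈ D) : IsVertexCover p q (insert e s) (uncross L C D) := by
  refine (isVertexCover_insert p q).2 ⟨?_, fun f hf => ?_⟩
  · have := hL e
    simp only [uncross, mem_union, mem_inter, mem_sdiff]
    tauto
  · have := hL f
    have := hC f hf
    have := hD f hf
    simp only [uncross, mem_union, mem_inter, mem_sdiff]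
    tauto

end Cover

section Matching

variable [DecidableEq V] {p q : E → V}

variable (p q) in
def load {M : Type*} [AddCommMonoid M] (F : Finset E) (x : E → M) : V → M :=
  ∑ e ∈ F, (Pi.single (p e) (x e) + Pi.single (q e) (x e))

lemma load_insert_update {M : Type*} [AddCommMonoid M] {e : E} {s : Finset E} (he : e ∉ s)
    (x : E → M) (a : M) :
    load p q (insert e s) (Function.update x e a) =
      Pi.single (p e) a + Pi.single (q e) a + load p q s x := by
  rw [load, sum_insert he, Function.update_self]
  congr 1
  refine sum_congr rfl fun f hf => ?_
  rw [Function.update_of_ne (ne_of_mem_of_not_mem hf he)]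

lemma mem_PGb_iff_load_eq [Fintype E] {ends : E → Sym2 V} (hends : ∀ e, ends e = s(p e, q e))
    (hpq : ∀ e, p e ≠ q e) {b : V → ℝ} {x : E → ℝ} :
    x ∈ PGb ends b ↔ 0 ≤ x ∧ load p q univ x = b := by
  refine and_congr Iff.rfl ?_
  rw [funext_iff]
  refine forall_congr' fun v => ?_
  rw [load, Finset.sum_apply]
  refine Eq.congr_left (sum_congr rfl fun e _ => ?_)
  have := hpq e
  simp only [hends e, Sym2.mem_iff, Pi.add_apply, Pi.single_apply]
  split_ifs <;> grind

variable [Fintype V]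

lemma surplus_load_nonneg {F : Finset E} {C : Finset V} (hC : IsVertexCover p q F C)
    {x : E → ℝ} (hx : 0 ≤ x) : 0 ≤ surplus C (load p q F x) := by
  rw [load, map_sum]
  refine sum_nonneg fun e he => ?_
  rw [map_add, surplus_single, surplus_single]
  have : 0 ≤ x e := hx e
  rcases hC e he with h | h <;> split_ifs <;> linarith

variable (p q) in
def CoverCondition (F : Finset E) (b : V → ℝ) : Prop :=
  ∀ C, IsVertexCover p q F C → 0 ≤ surplus C b

lemma CoverCondition.eq_zero_of_empty {b : V → ℝ} (hb0 : 0 ≤ b)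
    (hb : CoverCondition p q ∅ b) : b = 0 := by
  have h := hb ∅ fun e he => absurd he (notMem_empty e)
  rw [surplus_apply, sum_empty, compl_empty, zero_sub, neg_nonneg] at h
  funext v
  exact (sum_eq_zero_iff_of_nonneg fun v _ => hb0 v).1 (h.antisymm (sum_nonneg fun v _ => hb0 v))
    v (mem_univ v)

lemma CoverCondition.sub_single_sub_single {e : E} {s : Finset E} {b : V → ℝ}
    (hb : CoverCondition p q (insert e s) b) {α : ℝ}
    (hboth : ∀ D, IsVertexCover p q s D → p e ∈ D → q e ∈ D → 2 * α ≤ surplus D b)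
    (hnone : ∀ C, IsVertexCover p q s C → p e ∉ C → q e ∉ C → 0 ≤ surplus C b + 2 * α) :
    CoverCondition p q s (b - Pi.single (p e) α - Pi.single (q e) α) := by
  intro C hC
  have hcov : p e ∈ C ∨ q e ∈ C → 0 ≤ surplus C b := fun h =>
    hb C ((isVertexCover_insert p q).2 ⟨h, hC⟩)
  rw [map_sub, map_sub, surplus_single, surplus_single]
  by_cases hu : p e ∈ C <;> by_cases hw : q e ∈ C <;> simp only [hu, hw, if_true, if_false]
  · linarith [hboth C hC hu hw]
  · linarith [hcov (Or.inl hu)]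
  · linarith [hcov (Or.inr hw)]
  · linarith [hnone C hC hu hw]

lemma CoverCondition.surplus_add_surplus_nonneg {L : Finset V} (hL : ∀ e, p e ∈ L ↔ q e ∉ L)
    {e : E} {s : Finset E} {b : V → ℝ} (hb : CoverCondition p q (insert e s) b)
    {C D : Finset V} (hC : IsVertexCover p q s C) (hD : IsVertexCover p q s D)
    (hpD : p e ∈ D) (hqD : q e ∈ D) : 0 ≤ surplus C b + surplus D b := by
  have hLc : ∀ e, p e ∈ Lᶜ ↔ q e ∉ Lᶜ := fun e => by simpa [mem_compl] using (hL e).not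
  rw [← surplus_uncross_add_surplus_uncross_compl L]
  exact add_nonneg (hb _ (hC.uncross_insert hL hD hpD hqD))
    (hb _ (hC.uncross_insert hLc hD hpD hqD))

lemma CoverCondition.surplus_insert_nonneg {e : E} {s : Finset E} {b : V → ℝ}
    (hb : CoverCondition p q (insert e s) b) {C : Finset V} (hC : IsVertexCover p q s C)
    {u : V} (hu : u = p e ∨ u = q e) (huC : u ∉ C) : 0 ≤ surplus C b + 2 * b u := by
  have h := hb (insert u C) <| (isVertexCover_insert p q).2
    ⟨by rcases hu with rfl | rfl <;> simp, fun f hf => (hC f hf).imp (mem_insert_of_mem ·)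
      (mem_insert_of_mem ·)⟩
  rwa [surplus_insert huC, two_nsmul, ← two_mul] at h

lemma CoverCondition.exists_edge_weight {L : Finset V} (hL : ∀ e, p e ∈ L ↔ q e ∉ L)
    {e : E} {s : Finset E} {b : V → ℝ} (hb0 : 0 ≤ b) (hb : CoverCondition p q (insert e s) b) :
    ∃ α : ℝ, 0 ≤ α ∧ α ≤ b (p e) ∧ α ≤ b (q e) ∧
      (∀ D, IsVertexCover p q s D → p e ∈ D → q e ∈ D → 2 * α ≤ surplus D b) ∧
      (∀ C, IsVertexCover p q s C → p e ∉ C → q e ∉ C → 0 ≤ surplus C b + 2 * α) := by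
  set P := univ.filter fun D : Finset V => IsVertexCover p q s D ∧ p e ∈ D ∧ q e ∈ D
  have hP : univ ∈ P :=
    mem_filter.2 ⟨mem_univ _, fun _ _ => Or.inl (mem_univ _), mem_univ _, mem_univ _⟩
  set m := P.inf' ⟨univ, hP⟩ fun D => surplus D b / 2
  have hmP : ∀ D ∈ P, m ≤ surplus D b / 2 := fun D hD => inf'_le _ hD
  have hm0 : 0 ≤ m := le_inf' _ _ fun D hD => by
    simp only [P, mem_filter, mem_univ, true_and] at hD
    linarith [hb D ((isVertexCover_insert p q).2 ⟨Or.inl hD.2.1, hD.1⟩)]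
  refine ⟨min (min (b (p e)) (b (q e))) m, le_min (le_min (hb0 _) (hb0 _)) hm0,
    (min_le_left _ _).trans (min_le_left _ _), (min_le_left _ _).trans (min_le_right _ _),
    fun D hD hu hw => ?_, fun C hC hu hw => ?_⟩
  · linarith [hmP D (by simp [P, hD, hu, hw]), min_le_right (min (b (p e)) (b (q e))) m]
  · have hpC := hb.surplus_insert_nonneg hC (Or.inl rfl) hu
    have hqC := hb.surplus_insert_nonneg hC (Or.inr rfl) hw
    have hmC : -surplus C b / 2 ≤ m := le_inf' _ _ fun D hD => by
      simp only [P, mem_filter, mem_univ, true_and] at hD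
      linarith [hb.surplus_add_surplus_nonneg hL hC hD.1 hD.2.1 hD.2.2]
    linarith [le_min (le_min (by linarith : -surplus C b / 2 ≤ b (p e))
      (by linarith : -surplus C b / 2 ≤ b (q e))) hmC]

theorem CoverCondition.exists_load_eq {L : Finset V} (hL : ∀ e, p e ∈ L ↔ q e ∉ L)
    {F : Finset E} {b : V → ℝ} (hb0 : 0 ≤ b) (hb : CoverCondition p q F b) :
    ∃ x : E → ℝ, 0 ≤ x ∧ load p q F x = b := by
  induction F using Finset.induction_on generalizing b with
  | empty => exact ⟨0, le_rfl, by rw [hb.eq_zero_of_empty hb0]; simp [load]⟩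
  | insert e s he ih =>
    obtain ⟨α, hα0, hαp, hαq, hboth, hnone⟩ := hb.exists_edge_weight hL hb0
    have hpq : p e ≠ q e := fun h => by simpa [h] using hL e
    have hb'0 : 0 ≤ b - Pi.single (p e) α - Pi.single (q e) α := fun v => by
      have : 0 ≤ b v := hb0 v
      simp only [Pi.sub_apply, Pi.single_apply, Pi.zero_apply]
      split_ifs with h1 h2 h2
      · exact absurd (h1.symm.trans h2) hpq
      · rw [h1]; linarith
      · rw [h2]; linarith
      · linarith
    obtain ⟨x, hx0, hx⟩ := ih hb'0 (hb.sub_single_sub_single hboth hnone)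
    refine ⟨Function.update x e α, fun f => ?_, ?_⟩
    · rcases eq_or_ne f e with rfl | h
      · simpa using hα0
      · simpa [h] using hx0 f
    · rw [load_insert_update he, hx]
      abel

end Matching

section Bipartition

variable [Fintype V]

lemma exists_endpoints_bipartition {ends : E → Sym2 V}
    (hbip : ∃ f : V → Bool, ∀ (e : E) (u w : V), ends e = s(u, w) → f u ≠ f w) :
    ∃ (p q : E → V) (L : Finset V), (∀ e, ends e = s(p e, q e)) ∧ ∀ e, p e ∈ L ↔ q e ∉ L := by
  obtain ⟨f, hf⟩ := hbip
  have : ∀ e, ∃ u w, ends e = s(u, w) := fun e => Sym2.ind (fun u w => ⟨u, w, rfl⟩) (ends e)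
  choose p q hends using this
  refine ⟨p, q, univ.filter fun v => f v = true, hends, fun e => ?_⟩
  have h := hf e _ _ (hends e)
  simp only [mem_filter, mem_univ, true_and]
  revert h
  cases f (p e) <;> cases f (q e) <;> simp

end Bipartition

theorem PGb_nonempty_iff_bipartite [Fintype V] [DecidableEq V] [Fintype E]
    (ends : E → Sym2 V) (b : V → ℝ)
    (hbip : ∃ f : V → Bool, ∀ (e : E) (u w : V), ends e = s(u, w) → f u ≠ f w)
    (hb : ∀ v, 0 ≤ b v) :
    (PGb ends b).Nonempty ↔
      ∀ C : Finset V, (∀ e : E, ∃ v ∈ C, v ∈ ends e) →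
        ∑ v ∈ Cᶜ, b v ≤ ∑ v ∈ C, b v := by
  obtain ⟨p, q, L, hends, hL⟩ := exists_endpoints_bipartition hbip
  have hpq : ∀ e, p e ≠ q e := fun e h => by simpa [h] using hL e
  simp only [← isVertexCover_univ_iff hends, ← sub_nonneg (b := ∑ v ∈ _ᶜ, b v), ← surplus_apply]
  constructor
  · rintro ⟨x, hx⟩ C hC
    obtain ⟨hx0, rfl⟩ := (mem_PGb_iff_load_eq hends hpq).1 hx
    exact surplus_load_nonneg hC hx0
  · intro h
    obtain ⟨x, hx0, hx⟩ := CoverCondition.exists_load_eq hL hb h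
    exact ⟨x, (mem_PGb_iff_load_eq hends hpq).2 ⟨hx0, hx⟩⟩
end

section
/- For an arbitrary finite graph G and nonnegative b : V → R, the polytope P(G,b) is nonempty if and only if for all partitions V = V1 ⊔ V2 ⊔ V3 of the vertex set such that G has no edge with both endpoints in V3 and no edge between V2 and V3, the sum of b over V1 is at least the sum of b over V3. -/
open Finset
open scoped Classical

variable {V E : Type}

/-!
`P(G,b)` is the set of nonnegative solutions of `A x = b`, `A` the vertex-edge incidence matrix,
so by Farkas' lemma it is nonempty iff `∑ v, b v * y v ≥ 0` for every `y` with `y u + y w ≥ 0`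
on each edge `uw`. The `{-1, 0, 1}`-valued such `y` are exactly the vectors `𝟙 V1 - 𝟙 V3` of
the partitions in the statement, for which the inequality is the partition condition. A general
such `y` is a nonnegative combination of them: `sign y` is again one, and subtracting
`s • sign y`, with `s` the smallest nonzero `|y v|`, keeps the edge constraints and kills a
coordinate.
-/

section ConicHull

variable {ι 𝕜 M : Type*} [Fintype ι] [Field 𝕜] [LinearOrder 𝕜] [IsStrictOrderedRing 𝕜]
  [AddCommGroup M] [Module 𝕜 M] {c : ι → M}

theorem PointedCone.mem_hull_range_iff {z : M} :
    z ∈ PointedCone.hull 𝕜 (Set.range c) ↔ ∃ x : ι → 𝕜, 0 ≤ x ∧ ∑ i, x i • c i = z := by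
  rw [PointedCone.hull, Submodule.mem_span_range_iff_exists_fun]
  constructor
  · rintro ⟨x, rfl⟩
    exact ⟨fun i => x i, fun i => (x i).2, rfl⟩
  · rintro ⟨x, hx, rfl⟩
    exact ⟨fun i => ⟨x i, hx i⟩, rfl⟩

-- Move along a linear dependence of the generators until the first coefficient reaches zero.
theorem exists_nonneg_sum_smul_eq_of_not_linearIndepOn {s : Finset ι} {x : ι → 𝕜} (hx : 0 ≤ x)
    (hxs : ∀ i ∉ s, x i = 0) (hs : ¬LinearIndepOn 𝕜 c s) :
    ∃ i ∈ s, ∃ x' : ι → 𝕜, 0 ≤ x' ∧ (∀ j ∉ s.erase i, x' j = 0) ∧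
      ∑ j, x' j • c j = ∑ j, x j • c j := by
  obtain ⟨g, hg, j, hjs, hgj⟩ : ∃ g : ι → 𝕜, ∑ i ∈ s, g i • c i = 0 ∧ ∃ j ∈ s, 0 < g j := by
    obtain ⟨g, hg, j, hjs, hgj⟩ := not_linearIndepOn_finset_iff.mp hs
    rcases hgj.lt_or_gt with h | h
    · exact ⟨-g, by simp [hg], j, hjs, neg_pos.mpr h⟩
    · exact ⟨g, hg, j, hjs, h⟩
  obtain ⟨i, hiP, hmin⟩ := (s.filter (0 < g ·)).exists_min_image (fun i => x i / g i)
    ⟨j, mem_filter.mpr ⟨hjs, hgj⟩⟩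
  rw [mem_filter] at hiP
  set t := x i / g i
  have ht : 0 ≤ t := div_nonneg (hx i) hiP.2.le
  refine ⟨i, hiP.1, fun k => x k - t * (if k ∈ s then g k else 0), fun k => ?_, fun k hk => ?_, ?_⟩
  · by_cases hk : k ∈ s ∧ 0 < g k
    · have := (le_div_iff₀ hk.2).mp (hmin k (mem_filter.mpr hk))
      simp only [Pi.zero_apply, hk.1, if_true]
      linarith
    · have hg : (if k ∈ s then g k else 0) ≤ 0 := by
        split_ifs with h
        · exact not_lt.mp fun hgk => hk ⟨h, hgk⟩
        · rfl
      have hxk : 0 ≤ x k := hx k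
      have := mul_nonpos_of_nonneg_of_nonpos ht hg
      simp only [Pi.zero_apply]
      linarith
  · by_cases hks : k ∈ s
    · obtain rfl : k = i := by simpa [hks] using hk
      simp [hks, t, div_mul_cancel₀ _ hiP.2.ne']
    · simp [hks, hxs k hks]
  · simp only [sub_smul, sum_sub_distrib, mul_smul, ← smul_sum, ite_smul, zero_smul,
      sum_ite_mem, univ_inter, hg, smul_zero, sub_zero]

theorem exists_linearIndepOn_nonneg_sum_smul_eq {x : ι → 𝕜} (hx : 0 ≤ x) :
    ∃ s : Finset ι, LinearIndepOn 𝕜 c s ∧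
      ∃ y : s → 𝕜, 0 ≤ y ∧ ∑ i, y i • c i = ∑ i, x i • c i := by
  suffices ∀ (s : Finset ι) (x : ι → 𝕜), 0 ≤ x → (∀ i ∉ s, x i = 0) → ∃ s' : Finset ι,
      LinearIndepOn 𝕜 c s' ∧ ∃ y : s' → 𝕜, 0 ≤ y ∧ ∑ i, y i • c i = ∑ i, x i • c i from
    this univ x hx (by simp)
  intro s
  induction s using Finset.strongInduction with
  | H s ih =>
  intro x hx hxs
  by_cases hs : LinearIndepOn 𝕜 c s
  · refine ⟨s, hs, fun i => x i, fun i => hx i, ?_⟩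
    rw [sum_coe_sort s fun i => x i • c i]
    exact sum_subset (subset_univ s) fun i _ hi => by simp [hxs i hi]
  · obtain ⟨i, hi, x', hx', hx's, hsum⟩ := exists_nonneg_sum_smul_eq_of_not_linearIndepOn hx hxs hs
    obtain ⟨s', hs', y, hy, hsum'⟩ := ih _ (erase_ssubset hi) x' hx' hx's
    exact ⟨s', hs', y, hy, hsum'.trans hsum⟩

end ConicHull

section Farkas

variable {ι F : Type*} [Fintype ι] [TopologicalSpace F] [AddCommGroup F]
  [IsTopologicalAddGroup F] [Module ℝ F] [ContinuousSMul ℝ F] [T2Space F]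

-- By conic Carathéodory, the cone is a finite union of images of closed orthants under
-- injective linear maps from finite-dimensional spaces.
theorem PointedCone.isClosed_hull_range (c : ι → F) :
    IsClosed (PointedCone.hull ℝ (Set.range c) : Set F) := by
  have hunion : (PointedCone.hull ℝ (Set.range c) : Set F) =
      ⋃ s : {s : Finset ι // LinearIndepOn ℝ c s},
        Fintype.linearCombination ℝ (fun i : s.1 => c i) '' Set.Ici 0 := by
    ext z
    simp only [SetLike.mem_coe, Set.mem_iUnion, Set.mem_image, Set.mem_Ici,
      Fintype.linearCombination_apply]
    constructor
    · intro hz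
      obtain ⟨x, hx, rfl⟩ := PointedCone.mem_hull_range_iff.mp hz
      obtain ⟨s, hs, y, hy, hsum⟩ := exists_linearIndepOn_nonneg_sum_smul_eq (c := c) hx
      exact ⟨⟨s, hs⟩, y, hy, hsum⟩
    · rintro ⟨s, y, hy, rfl⟩
      exact Submodule.sum_mem _ fun i _ =>
        PointedCone.smul_mem _ (hy i) (PointedCone.subset_hull ⟨i, rfl⟩)
  rw [hunion]
  exact isClosed_iUnion_of_finite fun s =>
    (LinearMap.isClosedEmbedding_of_injective (LinearMap.ker_eq_bot.mpr
      s.2.fintypeLinearCombination_injective)).isClosedMap _ isClosed_Ici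

theorem PointedCone.mem_hull_range_of_forall_dual_nonneg [LocallyConvexSpace ℝ F]
    {c : ι → F} {b : F} (h : ∀ f : StrongDual ℝ F, (∀ i, 0 ≤ f (c i)) → 0 ≤ f b) :
    b ∈ PointedCone.hull ℝ (Set.range c) := by
  let C : ProperCone ℝ F := ⟨PointedCone.hull ℝ (Set.range c), isClosed_hull_range c⟩
  by_contra hb
  obtain ⟨f, hfC, hfb⟩ := C.hyperplane_separation_point (x₀ := b) hb
  exact hfb.not_ge (h f fun i => hfC _ (PointedCone.subset_hull ⟨i, rfl⟩))

end Farkas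

section Duality

variable [Fintype V] (ends : E → Sym2 V)

def IsDualFeasible (y : V → ℝ) : Prop :=
  ∀ e, 0 ≤ ∑ v, if v ∈ ends e then y v else 0

theorem Sym2.sum_ite_mem_mk (y : V → ℝ) (u w : V) :
    (∑ v, if v ∈ s(u, w) then y v else 0) = if u = w then y u else y u + y w := by
  have hmem : ∀ v, v ∈ s(u, w) ↔ v ∈ ({u, w} : Finset V) := by simp
  simp only [hmem, sum_ite_mem, univ_inter]
  split_ifs with h
  · simp [h]
  · exact sum_pair h

variable {ends}

theorem isDualFeasible_iff {y : V → ℝ} :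
    IsDualFeasible ends y ↔ ∀ e u w, ends e = s(u, w) → 0 ≤ y u + y w := by
  refine forall_congr' fun e => ?_
  induction ends e using Sym2.ind with
  | h u w =>
    simp only [Sym2.sum_ite_mem_mk, Sym2.eq_iff]
    constructor
    · rintro h u' w' (⟨rfl, rfl⟩ | ⟨rfl, rfl⟩) <;> split_ifs at h with huw
      all_goals first | linarith | (subst huw; linarith)
    · intro h
      have := h u w (Or.inl ⟨rfl, rfl⟩)
      split_ifs with huw
      · subst huw; linarith
      · exact this

theorem sum_mul_nonneg_of_mem_PGb [Fintype E] {b y : V → ℝ} {x : E → ℝ}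
    (hx : x ∈ PGb ends b) (hy : IsDualFeasible ends y) : 0 ≤ ∑ v, b v * y v := by
  obtain ⟨hx0, hxb⟩ := hx
  calc 0 ≤ ∑ e, x e * ∑ v, (if v ∈ ends e then y v else 0) :=
        sum_nonneg fun e _ => mul_nonneg (hx0 e) (hy e)
    _ = ∑ v, b v * y v := by
        simp only [← hxb, mul_sum, sum_mul, mul_ite, ite_mul, mul_zero, zero_mul]
        exact sum_comm

theorem PGb_nonempty_of_forall_isDualFeasible [Fintype E] {b : V → ℝ}
    (h : ∀ y, IsDualFeasible ends y → 0 ≤ ∑ v, b v * y v) : (PGb ends b).Nonempty := by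
  let c : E → V → ℝ := fun e v => if v ∈ ends e then 1 else 0
  have hb : b ∈ PointedCone.hull ℝ (Set.range c) := by
    refine PointedCone.mem_hull_range_of_forall_dual_nonneg fun f hf => ?_
    set y : V → ℝ := fun v => f fun w => if v = w then 1 else 0
    have hfy : ∀ z, f z = ∑ v, z v * y v := fun z =>
      (LinearMap.pi_apply_eq_sum_univ (f : (V → ℝ) →ₗ[ℝ] ℝ) z).trans (by simp [y])
    rw [hfy]
    exact h y fun e => by simpa [hfy, c] using hf e
  obtain ⟨x, hx, hxb⟩ := PointedCone.mem_hull_range_iff.mp hb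
  exact ⟨x, hx, fun v => by simpa [c] using congrFun hxb v⟩

theorem IsDualFeasible.sub_mul_sign {y : V → ℝ} (hy : IsDualFeasible ends y) {s : ℝ}
    (hsy : ∀ v, y v ≠ 0 → s ≤ |y v|) :
    IsDualFeasible ends fun v => y v - s * Real.sign (y v) := by
  have hpos : ∀ v, 0 < y v → y v - s * Real.sign (y v) = y v - s := fun v hv => by
    rw [Real.sign_of_pos hv, mul_one]
  have hneg : ∀ v, y v < 0 → y v - s * Real.sign (y v) = y v + s := fun v hv => by
    rw [Real.sign_of_neg hv]; ring
  have hnonneg : ∀ v, 0 ≤ y v → 0 ≤ y v - s * Real.sign (y v) := fun v hv => by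
    rcases hv.eq_or_lt with hv | hv
    · simp [← hv, Real.sign_zero]
    · rw [hpos v hv, sub_nonneg]
      simpa [abs_of_pos hv] using hsy v hv.ne'
  rw [isDualFeasible_iff] at hy ⊢
  intro e u w he
  have huw := hy e u w he
  by_cases hu : y u < 0
  · rw [hneg u hu, hpos w (by linarith)]; linarith
  by_cases hw : y w < 0
  · rw [hneg w hw, hpos u (by linarith)]; linarith
  · exact add_nonneg (hnonneg u (not_lt.mp hu)) (hnonneg w (not_lt.mp hw))

end Duality

section Partition

variable [Fintype V] [DecidableEq V] {ends : E → Sym2 V} {b : V → ℝ}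

variable (ends b) in
def PartitionCondition : Prop :=
  ∀ V1 V2 V3 : Finset V,
    V1 ∪ V2 ∪ V3 = Finset.univ →
    Disjoint V1 V2 → Disjoint V1 V3 → Disjoint V2 V3 →
    (∀ (e : E) (x y : V), ends e = s(x, y) → x ∈ V2 ∪ V3 → y ∉ V3) →
    ∑ v ∈ V3, b v ≤ ∑ v ∈ V1, b v

theorem partitionCondition_of_forall_isDualFeasible
    (h : ∀ y, IsDualFeasible ends y → 0 ≤ ∑ v, b v * y v) : PartitionCondition ends b := by
  intro V1 V2 V3 hcover h12 h13 h23 hedge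
  set χ : V → ℝ := fun v => (if v ∈ V1 then 1 else 0) - (if v ∈ V3 then 1 else 0)
  have hχ1 : ∀ v ∈ V1, χ v = 1 := fun v hv => by simp [χ, hv, disjoint_left.mp h13 hv]
  have hχ3 : ∀ v ∈ V3, χ v = -1 := fun v hv => by simp [χ, hv, disjoint_right.mp h13 hv]
  have hχ0 : ∀ v ∉ V3, 0 ≤ χ v := fun v hv => by
    simp only [χ, if_neg hv, sub_zero]; split_ifs <;> norm_num
  have hmem1 : ∀ e u w, ends e = s(u, w) → u ∈ V3 → w ∈ V1 := by
    intro e u w he hu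
    have hw3 : w ∉ V3 := hedge e u w he (mem_union_right _ hu)
    have hw2 : w ∉ V2 := fun hw => hedge e w u (he.trans Sym2.eq_swap) (mem_union_left _ hw) hu
    simpa [← hcover, hw2, hw3] using mem_univ w
  have hχ : IsDualFeasible ends χ := isDualFeasible_iff.mpr fun e u w he => by
    by_cases hu : u ∈ V3
    · rw [hχ3 u hu, hχ1 w (hmem1 e u w he hu)]; norm_num
    by_cases hw : w ∈ V3
    · rw [hχ3 w hw, hχ1 u (hmem1 e w u (he.trans Sym2.eq_swap) hw)]; norm_num
    · exact add_nonneg (hχ0 u hu) (hχ0 w hw)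
  have hsum : ∑ v, b v * χ v = ∑ v ∈ V1, b v - ∑ v ∈ V3, b v := by
    simp only [χ, mul_sub, mul_ite, mul_one, mul_zero, sum_sub_distrib, sum_ite_mem, univ_inter]
  linarith [h χ hχ]

theorem PartitionCondition.sum_mul_sign_nonneg (h : PartitionCondition ends b) {y : V → ℝ}
    (hy : IsDualFeasible ends y) : 0 ≤ ∑ v, b v * Real.sign (y v) := by
  have hsum : ∑ v, b v * Real.sign (y v) =
      ∑ v ∈ univ.filter (0 < y ·), b v - ∑ v ∈ univ.filter (y · < 0), b v := by
    rw [sum_filter, sum_filter, ← sum_sub_distrib]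
    refine sum_congr rfl fun v _ => ?_
    rcases lt_trichotomy (y v) 0 with hv | hv | hv
    · simp [Real.sign_of_neg hv, hv, hv.not_gt]
    · simp [hv, Real.sign_zero]
    · simp [Real.sign_of_pos hv, hv, hv.not_gt]
  rw [hsum, sub_nonneg]
  refine h _ (univ.filter (y · = 0)) _ ?_ ?_ ?_ ?_ ?_
  · ext v
    simp only [mem_union, mem_filter, mem_univ, true_and, iff_true]
    rcases lt_trichotomy (y v) 0 with hv | hv | hv <;> tauto
  · exact disjoint_filter.mpr fun v _ h1 h2 => by linarith
  · exact disjoint_filter.mpr fun v _ h1 h2 => by linarith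
  · exact disjoint_filter.mpr fun v _ h1 h2 => by linarith
  · intro e u w he hu hw
    simp only [mem_union, mem_filter, mem_univ, true_and] at hu hw
    have := isDualFeasible_iff.mp hy e u w he
    rcases hu with hu | hu <;> linarith

theorem PartitionCondition.sum_mul_nonneg (h : PartitionCondition ends b) {y : V → ℝ}
    (hy : IsDualFeasible ends y) : 0 ≤ ∑ v, b v * y v := by
  induction hn : (univ.filter (y · ≠ 0)).card using Nat.strong_induction_on generalizing y with
  | _ n ih =>
  obtain hS | hS := (univ.filter (y · ≠ 0)).eq_empty_or_nonempty
  · have hy0 : ∀ v, y v = 0 := by simpa [filter_eq_empty_iff] using hS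
    simp [hy0]
  obtain ⟨u, hu, hmin⟩ := (univ.filter (y · ≠ 0)).exists_min_image (|y ·|) hS
  set s := |y u|
  set y' : V → ℝ := fun v => y v - s * Real.sign (y v)
  have hy' : IsDualFeasible ends y' :=
    hy.sub_mul_sign fun v hv => hmin v (by simpa using hv)
  have hsupp : univ.filter (y' · ≠ 0) ⊂ univ.filter (y · ≠ 0) := by
    refine ssubset_iff_of_subset (fun v => ?_) |>.mpr ⟨u, hu, ?_⟩
    · simp only [mem_filter, mem_univ, true_and, y']
      exact mt fun hv => by simp [hv, Real.sign_zero]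
    · have hu0 : y u ≠ 0 := by simpa using hu
      rcases hu0.lt_or_gt with hu0 | hu0
      · simp [y', s, abs_of_neg hu0, Real.sign_of_neg hu0]
      · simp [y', s, abs_of_pos hu0, Real.sign_of_pos hu0]
  calc 0 ≤ ∑ v, b v * y' v + s * ∑ v, b v * Real.sign (y v) :=
        add_nonneg (ih _ (hn ▸ card_lt_card hsupp) hy' rfl)
          (mul_nonneg (abs_nonneg _) (h.sum_mul_sign_nonneg hy))
    _ = ∑ v, b v * y v := by
        simp only [y', mul_sub, sum_sub_distrib, mul_sum, mul_left_comm s]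
        ring

end Partition

theorem PGb_nonempty_iff_general [Fintype V] [DecidableEq V] [Fintype E]
    (ends : E → Sym2 V) (b : V → ℝ) :
    (PGb ends b).Nonempty ↔
      ∀ V1 V2 V3 : Finset V,
        V1 ∪ V2 ∪ V3 = Finset.univ →
        Disjoint V1 V2 → Disjoint V1 V3 → Disjoint V2 V3 →
        (∀ (e : E) (x y : V), ends e = s(x, y) → x ∈ V2 ∪ V3 → y ∉ V3) →
        ∑ v ∈ V3, b v ≤ ∑ v ∈ V1, b v :=
  ⟨fun ⟨_, hx⟩ => partitionCondition_of_forall_isDualFeasible fun _ => sum_mul_nonneg_of_mem_PGb hx,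
    fun h => PGb_nonempty_of_forall_isDualFeasible fun _ => PartitionCondition.sum_mul_nonneg h⟩

theorem PGb_nonempty_iff [Fintype V] [DecidableEq V] [Fintype E]
    (ends : E → Sym2 V) (b : V → ℝ) (hb : ∀ v, 0 ≤ b v) :
    (PGb ends b).Nonempty ↔
      ∀ V1 V2 V3 : Finset V,
        V1 ∪ V2 ∪ V3 = Finset.univ →
        Disjoint V1 V2 → Disjoint V1 V3 → Disjoint V2 V3 →
        (∀ (e : E) (x y : V), ends e = s(x, y) → x ∈ V2 ∪ V3 → y ∉ V3) →
        ∑ v ∈ V3, b v ≤ ∑ v ∈ V1, b v :=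
  PGb_nonempty_iff_general ends b
end

section
/- Let u be a vertex of P(G,b) and H its graph (the spanning subgraph with edges {e : u_e > 0}). Then u is the unique element of P(G,b) whose graph equals H; moreover u is the unique element of P(G,b) whose graph is contained in H. Conversely, if an element u of P(G,b) is the unique element whose graph is contained in its own graph, then u is a vertex of P(G,b). -/
open Finset
open scoped Classical

variable {V E : Type}

/-! If the support of `x ∈ P(G,b)` lies in the support of `u`, then `ε • x ≤ u` for some `ε > 0`
(finitely many coordinates), so `y = (1 + ε) • u - ε • x` is still in `P(G,b)` and `u` lies in the
open segment between `x` and `y`; if `u` is a vertex this forces `x = u`. Conversely, if `u` lies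
in the open segment between two nonnegative vectors, both have support inside that of `u`. -/

section NonnegSupport

variable {ι : Type*}

theorem exists_pos_smul_le_of_support_subset [Finite ι] {x u : ι → ℝ} (hu : 0 ≤ u)
    (hsub : {i | 0 < x i} ⊆ {i | 0 < u i}) : ∃ ε : ℝ, 0 < ε ∧ ε • x ≤ u := by
  have hev : ∀ i, ∀ᶠ ε in nhdsWithin (0 : ℝ) (Set.Ioi 0), ε * x i ≤ u i := by
    intro i
    rcases (hu i).lt_or_eq with hpos | hzero
    · have hlim : Filter.Tendsto (fun ε : ℝ => ε * x i) (nhdsWithin 0 (Set.Ioi 0)) (nhds 0) :=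
        ((continuous_mul_const (x i)).tendsto' 0 0 (zero_mul _)).mono_left nhdsWithin_le_nhds
      exact (hlim.eventually (gt_mem_nhds hpos)).mono fun _ h => h.le
    · have hx : x i ≤ 0 := not_lt.1 fun h => (hsub h : 0 < u i).ne' hzero.symm
      filter_upwards [self_mem_nhdsWithin] with ε (hε : 0 < ε)
      rw [← hzero]
      exact mul_nonpos_of_nonneg_of_nonpos hε.le hx
  obtain ⟨ε, hle, hε⟩ := ((Filter.eventually_all.2 hev).and self_mem_nhdsWithin).exists
  exact ⟨ε, hε, fun i => hle i⟩

theorem mem_openSegment_one_add_smul_sub_smul {x u : ι → ℝ} {ε : ℝ} (hε : 0 < ε) :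
    u ∈ openSegment ℝ x ((1 + ε) • u - ε • x) := by
  refine ⟨ε / (1 + ε), 1 / (1 + ε), by positivity, by positivity, by field_simp; ring, ?_⟩
  funext i
  simp only [Pi.add_apply, Pi.sub_apply, Pi.smul_apply, smul_eq_mul]
  field_simp
  ring

theorem support_subset_of_mem_openSegment {x₁ x₂ u : ι → ℝ} (hx₂ : 0 ≤ x₂)
    (hu : u ∈ openSegment ℝ x₁ x₂) : {i | 0 < x₁ i} ⊆ {i | 0 < u i} := by
  obtain ⟨a, c, ha, hc, -, rfl⟩ := hu
  intro i (hi : 0 < x₁ i)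
  exact add_pos_of_pos_of_nonneg (mul_pos ha hi) (mul_nonneg hc.le (hx₂ i))

theorem eq_of_mem_extremePoints_of_support_subset [Finite ι] {F : Type*} [AddCommGroup F]
    [Module ℝ F] {f : (ι → ℝ) →ₗ[ℝ] F} {c : F} {x u : ι → ℝ}
    (hu : u ∈ Set.extremePoints ℝ {y | 0 ≤ y ∧ f y = c}) (hx : x ∈ {y | 0 ≤ y ∧ f y = c})
    (hsub : {i | 0 < x i} ⊆ {i | 0 < u i}) : x = u := by
  obtain ⟨⟨hu₀, hfu⟩, hext⟩ := hu
  obtain ⟨ε, hε, hle⟩ := exists_pos_smul_le_of_support_subset hu₀ hsub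
  have hy : (1 + ε) • u - ε • x ∈ {y | 0 ≤ y ∧ f y = c} := by
    refine ⟨?_, ?_⟩
    · calc (0 : ι → ℝ) ≤ ε • u := smul_nonneg hε.le hu₀
        _ ≤ (1 + ε) • u - ε • x := fun i => by
          have hi : ε * x i ≤ u i := hle i
          simp only [Pi.sub_apply, Pi.smul_apply, smul_eq_mul]
          linarith
    · rw [map_sub, map_smul, map_smul, hfu, hx.2, ← sub_smul, add_sub_cancel_right, one_smul]
  exact hext hx hy (mem_openSegment_one_add_smul_sub_smul hε)

theorem mem_extremePoints_of_support_subset_unique {P : Set (ι → ℝ)} (hP : ∀ x ∈ P, 0 ≤ x)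
    {u : ι → ℝ} (hu : u ∈ P) (huniq : ∀ x ∈ P, {i | 0 < x i} ⊆ {i | 0 < u i} → x = u) :
    u ∈ Set.extremePoints ℝ P :=
  ⟨hu, fun _ hx₁ _ hx₂ hseg =>
    huniq _ hx₁ (support_subset_of_mem_openSegment (hP _ hx₂) hseg)⟩

end NonnegSupport

theorem PGb_eq_incMatrix [Fintype E] (ends : E → Sym2 V) (b : V → ℝ) :
    PGb ends b = {x | 0 ≤ x ∧ (incMatrix ends).mulVecLin x = b} := by
  ext x
  simp only [PGb, Set.mem_ofPred_eq, Pi.le_def, Pi.zero_apply, Matrix.mulVecLin_apply, funext_iff,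
    Matrix.mulVec, dotProduct, incMatrix, ite_mul, one_mul, zero_mul]

theorem vertex_PGb_unique_graph_general [Fintype V] [Fintype E] (ends : E → Sym2 V)
    (b : V → ℝ)
    (u : E → ℝ) (hu : u ∈ PGb ends b) :
    (u ∈ Set.extremePoints ℝ (PGb ends b) →
      (∀ x ∈ PGb ends b, {e : E | 0 < x e} = {e : E | 0 < u e} → x = u) ∧
      (∀ x ∈ PGb ends b, {e : E | 0 < x e} ⊆ {e : E | 0 < u e} → x = u)) ∧
    ((∀ x ∈ PGb ends b, {e : E | 0 < x e} ⊆ {e : E | 0 < u e} → x = u) →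
      u ∈ Set.extremePoints ℝ (PGb ends b)) := by
  rw [PGb_eq_incMatrix] at hu ⊢
  refine ⟨fun hext => ⟨fun x hx heq => ?_, fun x hx hsub => ?_⟩,
    mem_extremePoints_of_support_subset_unique (fun _ hx => hx.1) hu⟩
  · exact eq_of_mem_extremePoints_of_support_subset hext hx heq.subset
  · exact eq_of_mem_extremePoints_of_support_subset hext hx hsub

theorem vertex_PGb_unique_graph [Fintype V] [Fintype E] (ends : E → Sym2 V)
    (b : V → ℝ) (hb : ∀ v, 0 ≤ b v) (hb0 : b ≠ 0)
    (u : E → ℝ) (hu : u ∈ PGb ends b) :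
    (u ∈ Set.extremePoints ℝ (PGb ends b) →
      (∀ x ∈ PGb ends b, {e : E | 0 < x e} = {e : E | 0 < u e} → x = u) ∧
      (∀ x ∈ PGb ends b, {e : E | 0 < x e} ⊆ {e : E | 0 < u e} → x = u)) ∧
    ((∀ x ∈ PGb ends b, {e : E | 0 < x e} ⊆ {e : E | 0 < u e} → x = u) →
      u ∈ Set.extremePoints ℝ (PGb ends b)) :=
  vertex_PGb_unique_graph_general ends b u hu
end
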